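/- There exists a finite simple connected graph G with at least two vertices such that μ(G) > max over all pairs of adjacent vertices v_i ~ v_j of G of 2 + √(2·(m_i² + m_j²) + (d_i − d_j)² − 4·(d_i + d_j) + 4). (This disproves conjectured edge-maximum bound 49 of Brankov, Hansen and Stevanović.) -/

import Mathlib

/-! The wheel `W₁₃`, the cone over the `13`-cycle, is a counterexample. If `v` is a universal
vertex of a graph on `n` vertices, then `L e_v = n e_v - 𝟙`, and since `L 𝟙 = 0` the vector
`L e_v` is an eigenvector for the eigenvalue `n`; hence `μ(W₁₃) ≥ 14`. The hub has `d = 13`,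
`m = 3` and each rim vertex `d = 3`, `m = 19 / 3`, so the bound is `2 + √1244 / 3 < 14` on the
spokes and `2 + √1264 / 3 < 14` on the rim. -/

noncomputable section

open Finset

/-- The degree of a vertex, as a real number. -/
def degR {V : Type*} [Fintype V] (G : SimpleGraph V) (v : V) : ℝ :=
  letI := Classical.decRel G.Adj
  (G.degree v : ℝ)

/-- The average degree of the neighbours of a vertex, as a real number:
`m_v = (∑_{u ~ v} d_u) / d_v`. -/
def avgDegR {V : Type*} [Fintype V] (G : SimpleGraph V) (v : V) : ℝ :=
  letI := Classical.decRel G.Adj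
  (∑ u ∈ G.neighborFinset v, (G.degree u : ℝ)) / (G.degree v : ℝ)

/-- The largest eigenvalue of the Laplacian matrix `L = D - A` of a finite graph. -/
def lapSpecRad {V : Type*} [Fintype V] [DecidableEq V] [Nonempty V]
    (G : SimpleGraph V) : ℝ :=
  letI := Classical.decRel G.Adj
  ⨆ i, (SimpleGraph.posSemidef_lapMatrix ℝ G).isHermitian.eigenvalues i

open SimpleGraph Matrix

theorem Matrix.mem_spectrum_of_mulVec_eq {n R : Type*} [Fintype n] [DecidableEq n] [CommRing R]
    {A : Matrix n n R} {x : n → R} {μ : R} (hx : x ≠ 0) (h : A *ᵥ x = μ • x) :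
    μ ∈ spectrum R A := by
  rw [← spectrum_toLin']
  refine (Module.End.hasEigenvalue_of_hasEigenvector ⟨?_, hx⟩).mem_spectrum
  rwa [Module.End.mem_eigenspace_iff, toLin'_apply]

section Laplacian

variable {V : Type*} [Fintype V] (G : SimpleGraph V) [DecidableRel G.Adj]

theorem degR_eq_degree (v : V) : degR G v = G.degree v := by
  obtain rfl : ‹DecidableRel G.Adj› = Classical.decRel G.Adj := Subsingleton.elim _ _
  rfl

theorem avgDegR_eq (v : V) :
    avgDegR G v = (∑ u ∈ G.neighborFinset v, (G.degree u : ℝ)) / G.degree v := by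
  obtain rfl : ‹DecidableRel G.Adj› = Classical.decRel G.Adj := Subsingleton.elim _ _
  rfl

variable [DecidableEq V]

theorem lapSpecRad_eq_iSup_eigenvalues [Nonempty V] :
    lapSpecRad G = ⨆ i, (posSemidef_lapMatrix ℝ G).isHermitian.eigenvalues i := by
  obtain rfl : ‹DecidableRel G.Adj› = Classical.decRel G.Adj := Subsingleton.elim _ _
  rfl

theorem le_lapSpecRad_of_mulVec_eq [Nonempty V] {x : V → ℝ} {μ : ℝ} (hx : x ≠ 0)
    (h : G.lapMatrix ℝ *ᵥ x = μ • x) : μ ≤ lapSpecRad G := by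
  have hA := (posSemidef_lapMatrix ℝ G).isHermitian
  rw [lapSpecRad_eq_iSup_eigenvalues]
  obtain ⟨i, rfl⟩ : μ ∈ Set.range hA.eigenvalues := by
    rw [← hA.spectrum_real_eq_range_eigenvalues]
    exact Matrix.mem_spectrum_of_mulVec_eq hx h
  exact le_ciSup (Set.finite_range _).bddAbove i

theorem lapMatrix_mulVec_single_of_isUniversal {v : V} (hv : G.IsUniversal v) :
    G.lapMatrix ℝ *ᵥ Pi.single v 1 =
      (Fintype.card V : ℝ) • Pi.single v 1 - fun _ ↦ 1 := by
  ext u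
  rw [lapMatrix_mulVec_apply, Finset.sum_pi_single']
  rcases eq_or_ne u v with rfl | huv
  · have hdeg := (degree_eq_card_sub_one G u).mpr hv
    simp [hdeg, Nat.cast_sub (Fintype.card_pos_iff.mpr ⟨u⟩)]
  · simp [huv, hv huv.symm, adj_comm]

theorem card_le_lapSpecRad_of_isUniversal [Nontrivial V] {v : V} (hv : G.IsUniversal v) :
    (Fintype.card V : ℝ) ≤ lapSpecRad G := by
  refine le_lapSpecRad_of_mulVec_eq G (x := G.lapMatrix ℝ *ᵥ Pi.single v 1) ?_ ?_
  · obtain ⟨w, hw⟩ := exists_ne v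
    rw [lapMatrix_mulVec_single_of_isUniversal G hv]
    intro h
    simpa [hw] using congrFun h w
  · rw [lapMatrix_mulVec_single_of_isUniversal G hv, Matrix.mulVec_sub, Matrix.mulVec_smul,
      lapMatrix_mulVec_const_eq_zero, sub_zero,
      lapMatrix_mulVec_single_of_isUniversal G hv]

end Laplacian

namespace SimpleGraph

variable {W : Type*} (H : SimpleGraph W)

def cone : SimpleGraph (Option W) where
  Adj
    | none, none => False
    | none, some _ => True
    | some _, none => True
    | some v, some w => H.Adj v w
  symm := ⟨by
    rintro (_ | v) (_ | w) h
    exacts [h, trivial, trivial, h.symm]⟩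
  loopless := ⟨by
    rintro (_ | v) h
    exacts [h, H.loopless.irrefl v h]⟩

@[simp] theorem cone_adj_none_none : ¬H.cone.Adj none none := id

@[simp] theorem cone_adj_none_some (w : W) : H.cone.Adj none (some w) := trivial

@[simp] theorem cone_adj_some_none (w : W) : H.cone.Adj (some w) none := trivial

@[simp] theorem cone_adj_some_some (v w : W) : H.cone.Adj (some v) (some w) ↔ H.Adj v w :=
  Iff.rfl

instance [DecidableRel H.Adj] : DecidableRel H.cone.Adj
  | none, none => inferInstanceAs (Decidable False)
  | none, some _ => inferInstanceAs (Decidable True)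
  | some _, none => inferInstanceAs (Decidable True)
  | some v, some w => inferInstanceAs (Decidable (H.Adj v w))

theorem isUniversal_cone_none : H.cone.IsUniversal none := by
  rintro (_ | w) h
  exacts [absurd rfl h, trivial]

theorem connected_cone : H.cone.Connected :=
  .of_isUniversal H.isUniversal_cone_none

variable [Fintype W] [DecidableRel H.Adj]

theorem neighborFinset_cone_none :
    H.cone.neighborFinset none = univ.map .some := by
  ext (_ | w) <;> simp

theorem neighborFinset_cone_some (w : W) :
    H.cone.neighborFinset (some w) = insertNone (H.neighborFinset w) := by
  ext (_ | u) <;> simp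

theorem degree_cone_none : H.cone.degree none = Fintype.card W := by
  rw [← card_neighborFinset_eq_degree, neighborFinset_cone_none, card_map, card_univ]

theorem degree_cone_some (w : W) : H.cone.degree (some w) = H.degree w + 1 := by
  rw [← card_neighborFinset_eq_degree, neighborFinset_cone_some, card_insertNone,
    card_neighborFinset_eq_degree]

end SimpleGraph

section RegularCone

variable {W : Type*} [Fintype W] {H : SimpleGraph W} [DecidableRel H.Adj] {k : ℕ}

theorem degR_cone_none : degR H.cone none = Fintype.card W := by
  rw [degR_eq_degree, degree_cone_none]

theorem degR_cone_some (hH : H.IsRegularOfDegree k) (w : W) : degR H.cone (some w) = k + 1 := by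
  rw [degR_eq_degree, degree_cone_some, hH.degree_eq, Nat.cast_succ]

theorem avgDegR_cone_none [Nonempty W] (hH : H.IsRegularOfDegree k) :
    avgDegR H.cone none = k + 1 := by
  have hn : (Fintype.card W : ℝ) ≠ 0 := Nat.cast_ne_zero.2 Fintype.card_ne_zero
  have hdeg : ∀ u ∈ H.cone.neighborFinset none, (H.cone.degree u : ℝ) = k + 1 := by
    rintro (_ | w) hu
    · simp at hu
    · rw [degree_cone_some, hH.degree_eq, Nat.cast_succ]
  rw [avgDegR_eq, sum_congr rfl hdeg, sum_const, card_neighborFinset_eq_degree, degree_cone_none,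
    nsmul_eq_mul, mul_div_cancel_left₀ _ hn]

theorem avgDegR_cone_some (hH : H.IsRegularOfDegree k) (w : W) :
    avgDegR H.cone (some w) = (Fintype.card W + k * (k + 1)) / (k + 1) := by
  rw [avgDegR_eq, neighborFinset_cone_some, sum_insertNone, degree_cone_none, degree_cone_some]
  simp only [degree_cone_some, hH.degree_eq, sum_const, card_neighborFinset_eq_degree,
    nsmul_eq_mul]
  push_cast
  ring

end RegularCone

def bound49 (di mi dj mj : ℝ) : ℝ :=
  2 + √(2 * (mi ^ 2 + mj ^ 2) + (di - dj) ^ 2 - 4 * (di + dj) + 4)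

theorem bound49_comm (di mi dj mj : ℝ) : bound49 di mi dj mj = bound49 dj mj di mi := by
  unfold bound49
  ring_nf

theorem bound49_lt_iff {di mi dj mj c : ℝ} (hc : 2 < c) :
    bound49 di mi dj mj < c ↔
      2 * (mi ^ 2 + mj ^ 2) + (di - dj) ^ 2 - 4 * (di + dj) + 4 < (c - 2) ^ 2 := by
  rw [bound49, ← lt_sub_iff_add_lt', Real.sqrt_lt' (sub_pos.2 hc)]

theorem bound49_cone_lt {W : Type*} [Fintype W] [Nonempty W] {H : SimpleGraph W}
    [DecidableRel H.Adj] {k : ℕ} (hH : H.IsRegularOfDegree k) {c : ℝ}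
    (hspoke : bound49 (Fintype.card W) (k + 1) (k + 1)
      ((Fintype.card W + k * (k + 1)) / (k + 1)) < c)
    (hrim : bound49 (k + 1) ((Fintype.card W + k * (k + 1)) / (k + 1))
      (k + 1) ((Fintype.card W + k * (k + 1)) / (k + 1)) < c)
    {a b : Option W} (hab : H.cone.Adj a b) :
    bound49 (degR H.cone a) (avgDegR H.cone a) (degR H.cone b) (avgDegR H.cone b) < c := by
  rcases a with _ | v <;> rcases b with _ | w
  · exact absurd hab (cone_adj_none_none H)
  · rwa [degR_cone_none, avgDegR_cone_none hH, degR_cone_some hH, avgDegR_cone_some hH]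
  · rwa [bound49_comm, degR_cone_none, avgDegR_cone_none hH, degR_cone_some hH,
      avgDegR_cone_some hH]
  · rwa [degR_cone_some hH, avgDegR_cone_some hH, degR_cone_some hH, avgDegR_cone_some hH]

/-- There exists a finite simple connected graph `G` with at least two vertices whose
Laplacian spectral radius exceeds the conjectured edge-maximum bound. -/
theorem exists_counterexample_bound49 :
    ∃ (V : Type) (_ : Fintype V) (_ : DecidableEq V) (_ : Nonempty V)
      (G : SimpleGraph V), G.Connected ∧ 2 ≤ Fintype.card V ∧
      ∀ i j : V, G.Adj i j →
        (fun di mi dj mj => 2 + Real.sqrt (2 * (mi ^ 2 + mj ^ 2) + (di - dj) ^ 2 - 4 * (di + dj) + 4))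
          (degR G i) (avgDegR G i) (degR G j) (avgDegR G j) < lapSpecRad G := by
  have hreg : (cycleGraph 13).IsRegularOfDegree 2 := fun _ ↦ cycleGraph_degree_three_le
  have hμ : (14 : ℝ) ≤ lapSpecRad (cycleGraph 13).cone := by
    simpa using card_le_lapSpecRad_of_isUniversal _ (cycleGraph 13).isUniversal_cone_none
  refine ⟨_, inferInstance, inferInstance, inferInstance, (cycleGraph 13).cone, connected_cone _,
    by simp, fun a b hab ↦ (bound49_cone_lt hreg ?_ ?_ hab).trans_le hμ⟩ <;>
    exact (bound49_lt_iff (by norm_num)).2 (by norm_num)
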